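/- ex_3(n, H_2 K_3) ≤ C(n,2): every 3-uniform hypergraph on n vertices with no 2-heavy copy of a triangle has at most C(n,2) hyperedges. Consequently ex_3(n, H_2 K_3) = (1 + o(1))·n²/2. -/

import Mathlib

open Finset

/-- `H` contains a `t`-heavy copy of the graph `F`: an injective placement of `V(F)`
such that every edge of `F` is contained in at least `t` hyperedges of `H`. -/
def HasHeavyCopy {V α : Type*} [DecidableEq V] (H : Finset (Finset V))
    (F : SimpleGraph α) (t : ℕ) : Prop :=
  ∃ i : α ↪ V, ∀ x y, F.Adj x y →
    t ≤ (H.filter (fun A => i x ∈ A ∧ i y ∈ A)).card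

/-- `H` contains a `t`-wise Berge copy of the graph `F`: an injective placement of `V(F)`
together with `t` hyperedges assigned to each edge of `F`, pairwise disjoint over distinct
edges, each containing both endpoints of its edge. -/
def HasBergeCopy {V α : Type*} (H : Finset (Finset V))
    (F : SimpleGraph α) (t : ℕ) : Prop :=
  ∃ (i : α ↪ V) (h : Sym2 α → Finset (Finset V)),
    (∀ e ∈ F.edgeSet, h e ⊆ H ∧ (h e).card = t ∧ ∀ A ∈ h e, ∀ x ∈ e, i x ∈ A) ∧
    ∀ e ∈ F.edgeSet, ∀ e' ∈ F.edgeSet, e ≠ e' → Disjoint (h e) (h e')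

/-- The Turán number of `t`-heavy copies of `F` for `r`-uniform hypergraphs on `n` vertices. -/
noncomputable def exHeavy {α : Type*} (n r t : ℕ) (F : SimpleGraph α) : ℕ :=
  sSup {m | ∃ H : Finset (Finset (Fin n)), (∀ A ∈ H, A.card = r) ∧
    ¬ HasHeavyCopy H F t ∧ H.card = m}

/-- The Turán number of `t`-wise Berge copies of `F` for `r`-uniform hypergraphs on `n` vertices. -/
noncomputable def exBerge {α : Type*} (n r t : ℕ) (F : SimpleGraph α) : ℕ :=
  sSup {m | ∃ H : Finset (Finset (Fin n)), (∀ A ∈ H, A.card = r) ∧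
    ¬ HasBergeCopy H F t ∧ H.card = m}

/-- `G` contains a copy of `F` as a subgraph. -/
def GraphContains {α β : Type*} (F : SimpleGraph α) (G : SimpleGraph β) : Prop :=
  ∃ f : α ↪ β, ∀ x y, F.Adj x y → G.Adj (f x) (f y)

/-- The number of `r`-cliques of `G`. -/
noncomputable def cliqueCount {β : Type*} [Fintype β] [DecidableEq β]
    (r : ℕ) (G : SimpleGraph β) : ℕ :=
  letI := Classical.decRel G.Adj
  (G.cliqueFinset r).card

/-- The number of edges of `G`. -/
noncomputable def edgeCount {β : Type*} [Fintype β] [DecidableEq β] (G : SimpleGraph β) : ℕ :=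
  letI := Classical.decRel G.Adj
  G.edgeFinset.card

/-- The generalized Turán number `ex(n, K_r, F)`. -/
noncomputable def exClique {α : Type*} (n r : ℕ) (F : SimpleGraph α) : ℕ :=
  sSup {m | ∃ G : SimpleGraph (Fin n), ¬ GraphContains F G ∧ cliqueCount r G = m}

/-- The Turán number `ex(n, F)`. -/
noncomputable def exTuran {α : Type*} (n : ℕ) (F : SimpleGraph α) : ℕ :=
  sSup {m | ∃ G : SimpleGraph (Fin n), ¬ GraphContains F G ∧ edgeCount G = m}

/-! If no triple is `2`-heavy, every hyperedge `A` contains a pair of vertices lying in no other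
hyperedge (otherwise the three pairs of `A` would make `A` a `2`-heavy triangle). Sending each
hyperedge to such a private pair is injective, so there are at most `C(n, 2)` hyperedges.
Conversely, the `C(n - 1, 2)` triples through a fixed vertex contain no `2`-heavy triangle, since a
pair avoiding that vertex lies in only one of them. Both bounds are `n² / 2 + O(n)`. -/

open Filter Topology

theorem card_le_choose_of_exists_private_subset {V : Type*} [Fintype V]
    {H : Finset (Finset V)} {k : ℕ}
    (h : ∀ A ∈ H, ∃ p ⊆ A, #p = k ∧ ∀ B ∈ H, p ⊆ B → B = A) :
    #H ≤ (Fintype.card V).choose k := by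
  choose! p hpA hpk hp using h
  calc #H ≤ #(univ.powersetCard k : Finset (Finset V)) :=
        card_le_card_of_injOn p (fun A hA => mem_powersetCard_univ.2 (hpk A hA))
          fun A hA B hB hAB => (hp A hA B hB (hAB ▸ hpA B hB)).symm
    _ = (Fintype.card V).choose k := by rw [card_powersetCard, card_univ]

def codegree {V : Type*} [DecidableEq V] (H : Finset (Finset V)) (u v : V) : ℕ :=
  #{A ∈ H | u ∈ A ∧ v ∈ A}

section Codegree

variable {V : Type*} [DecidableEq V] {H : Finset (Finset V)}

theorem codegree_comm (u v : V) : codegree H u v = codegree H v u := by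
  simp only [codegree, and_comm]

theorem two_le_codegree {A B : Finset V} (hA : A ∈ H) (hB : B ∈ H) (hAB : A ≠ B) {u v : V}
    (huA : u ∈ A) (hvA : v ∈ A) (huB : u ∈ B) (hvB : v ∈ B) : 2 ≤ codegree H u v :=
  one_lt_card.2 ⟨A, by simp [*], B, by simp [*], hAB⟩

theorem hasHeavyCopy_top_fin_three_iff {t : ℕ} :
    HasHeavyCopy H (⊤ : SimpleGraph (Fin 3)) t ↔
      ∃ a b c : V, a ≠ b ∧ a ≠ c ∧ b ≠ c ∧
        t ≤ codegree H a b ∧ t ≤ codegree H a c ∧ t ≤ codegree H b c := by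
  constructor
  · rintro ⟨i, hi⟩
    have heavy (x y : Fin 3) (hxy : x ≠ y) : t ≤ codegree H (i x) (i y) := hi x y hxy
    exact ⟨i 0, i 1, i 2, i.injective.ne (by decide), i.injective.ne (by decide),
      i.injective.ne (by decide), heavy 0 1 (by decide), heavy 0 2 (by decide),
      heavy 1 2 (by decide)⟩
  · rintro ⟨a, b, c, hab, hac, hbc, h_ab, h_ac, h_bc⟩
    refine ⟨⟨![a, b, c], fun x y hxy => ?_⟩, fun x y hxy => ?_⟩
    · fin_cases x <;> fin_cases y <;> simp_all
    · change t ≤ codegree H (![a, b, c] x) (![a, b, c] y)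
      fin_cases x <;> fin_cases y <;> simp_all [codegree_comm]

theorem exists_private_pair_of_not_hasHeavyCopy
    (hH : ¬ HasHeavyCopy H (⊤ : SimpleGraph (Fin 3)) 2) {A : Finset V} (hA : A ∈ H)
    (h3 : #A = 3) : ∃ p ⊆ A, #p = 2 ∧ ∀ B ∈ H, p ⊆ B → B = A := by
  by_contra! hshared
  obtain ⟨a, b, c, hab, hac, hbc, rfl⟩ := card_eq_three.1 h3
  have heavy : ∀ u ∈ ({a, b, c} : Finset V), ∀ v ∈ ({a, b, c} : Finset V), u ≠ v →
      2 ≤ codegree H u v := by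
    intro u hu v hv huv
    obtain ⟨B, hB, huvB, hBA⟩ :=
      hshared {u, v} (by simp [insert_subset_iff, hu, hv]) (card_pair huv)
    exact two_le_codegree hA hB hBA.symm hu hv (huvB (by simp)) (huvB (by simp))
  exact hH <| hasHeavyCopy_top_fin_three_iff.2 ⟨a, b, c, hab, hac, hbc,
    heavy a (by simp) b (by simp) hab, heavy a (by simp) c (by simp) hac,
    heavy b (by simp) c (by simp) hbc⟩

theorem card_le_choose_two_of_not_hasHeavyCopy [Fintype V] (h3 : ∀ A ∈ H, #A = 3)
    (hH : ¬ HasHeavyCopy H (⊤ : SimpleGraph (Fin 3)) 2) : #H ≤ (Fintype.card V).choose 2 :=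
  card_le_choose_of_exists_private_subset fun A hA =>
    exists_private_pair_of_not_hasHeavyCopy hH hA (h3 A hA)

end Codegree

section Star

variable {V : Type*} [DecidableEq V] [Fintype V]

def starTriples (z : V) : Finset (Finset V) :=
  ((univ.erase z).powersetCard 2).image (insert z)

variable {z : V}

theorem mem_starTriples {A : Finset V} :
    A ∈ starTriples z ↔ ∃ S, z ∉ S ∧ #S = 2 ∧ insert z S = A := by
  simp [starTriples, mem_powersetCard, subset_erase, and_assoc]

theorem card_of_mem_starTriples {A : Finset V} (hA : A ∈ starTriples z) : #A = 3 := by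
  obtain ⟨S, hzS, hS, rfl⟩ := mem_starTriples.1 hA
  rw [card_insert_of_notMem hzS, hS]

theorem card_starTriples : #(starTriples z) = (Fintype.card V - 1).choose 2 := by
  rw [starTriples, card_image_of_injOn, card_powersetCard, card_erase_of_mem (mem_univ z),
    card_univ]
  intro S hS T hT hST
  have hzS : z ∉ S := fun h => by simpa using (mem_powersetCard.1 hS).1 h
  have hzT : z ∉ T := fun h => by simpa using (mem_powersetCard.1 hT).1 h
  simpa [erase_insert hzS, erase_insert hzT] using congrArg (·.erase z) hST

theorem codegree_starTriples_le_one {u v : V} (huv : u ≠ v) (hu : u ≠ z) (hv : v ≠ z) :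
    codegree (starTriples z) u v ≤ 1 := by
  have only_edge : ∀ A ∈ starTriples z, u ∈ A ∧ v ∈ A → A = {z, u, v} := by
    rintro A hA ⟨huA, hvA⟩
    obtain ⟨S, hzS, hS, rfl⟩ := mem_starTriples.1 hA
    have huvS : {u, v} ⊆ S := by simp_all [insert_subset_iff]
    rw [eq_of_subset_of_card_le huvS (by rw [hS, card_pair huv])]
  refine card_le_one.2 fun A hA B hB => ?_
  rw [mem_filter] at hA hB
  rw [only_edge A hA.1 hA.2, only_edge B hB.1 hB.2]

theorem not_hasHeavyCopy_starTriples :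
    ¬ HasHeavyCopy (starTriples z) (⊤ : SimpleGraph (Fin 3)) 2 := by
  rw [hasHeavyCopy_top_fin_three_iff]
  rintro ⟨a, b, c, hab, hac, hbc, h_ab, h_ac, h_bc⟩
  by_cases ha : a = z
  · have := codegree_starTriples_le_one hbc (ha ▸ hab.symm) (ha ▸ hac.symm)
    omega
  by_cases hb : b = z
  · have := codegree_starTriples_le_one hac ha (hb ▸ hbc.symm)
    omega
  · have := codegree_starTriples_le_one hab ha hb
    omega

end Star

theorem exHeavy_triangle_le_choose (n : ℕ) :
    exHeavy n 3 2 (⊤ : SimpleGraph (Fin 3)) ≤ n.choose 2 :=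
  csSup_le' fun _ ⟨_, h3, hH, hm⟩ =>
    hm ▸ (card_le_choose_two_of_not_hasHeavyCopy h3 hH).trans_eq (by rw [Fintype.card_fin])

theorem choose_le_exHeavy_triangle (n : ℕ) :
    (n - 1).choose 2 ≤ exHeavy n 3 2 (⊤ : SimpleGraph (Fin 3)) := by
  rcases n with _ | n
  · simp
  refine le_csSup ⟨(n + 1).choose 2, fun _ ⟨_, h3, hH, hm⟩ => hm ▸ ?_⟩
    ⟨starTriples 0, fun _ => card_of_mem_starTriples, not_hasHeavyCopy_starTriples, ?_⟩
  · exact (card_le_choose_two_of_not_hasHeavyCopy h3 hH).trans_eq (by rw [Fintype.card_fin])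
  · rw [card_starTriples, Fintype.card_fin]

theorem tendsto_choose_two_sub_div_sq (c : ℕ) :
    Tendsto (fun n : ℕ => ((n - c).choose 2 : ℝ) / (n : ℝ) ^ 2) atTop (𝓝 (1 / 2)) := by
  have hinv (d : ℝ) : Tendsto (fun n : ℕ => d / (n : ℝ)) atTop (𝓝 0) :=
    tendsto_const_nhds.div_atTop tendsto_natCast_atTop_atTop
  have key : Tendsto (fun n : ℕ => (1 - c / (n : ℝ)) * (1 - (c + 1) / (n : ℝ)) / 2) atTop
      (𝓝 ((1 - 0) * (1 - 0) / 2)) :=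
    (((hinv c).const_sub 1).mul ((hinv (c + 1)).const_sub 1)).div_const 2
  rw [show ((1 : ℝ) - 0) * (1 - 0) / 2 = 1 / 2 by norm_num] at key
  refine key.congr' ?_
  filter_upwards [eventually_gt_atTop c] with n hn
  have hn0 : (n : ℝ) ≠ 0 := Nat.cast_ne_zero.2 (by omega)
  rw [Nat.cast_choose_two, Nat.cast_sub hn.le]
  field_simp
  ring

theorem exHeavy_triangle :
    (∀ (n : ℕ) (H : Finset (Finset (Fin n))), (∀ A ∈ H, A.card = 3) →
      ¬ HasHeavyCopy H (⊤ : SimpleGraph (Fin 3)) 2 → H.card ≤ n.choose 2) ∧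
    Filter.Tendsto
      (fun n : ℕ => (exHeavy n 3 2 (⊤ : SimpleGraph (Fin 3)) : ℝ) / (n : ℝ) ^ 2)
      Filter.atTop (nhds (1 / 2)) := by
  refine ⟨fun n H h3 hH => ?_, ?_⟩
  · simpa using card_le_choose_two_of_not_hasHeavyCopy h3 hH
  · refine tendsto_of_tendsto_of_tendsto_of_le_of_le (tendsto_choose_two_sub_div_sq 1)
      (by simpa using tendsto_choose_two_sub_div_sq 0) (fun n => ?_) (fun n => ?_)
    · gcongr
      exact_mod_cast choose_le_exHeavy_triangle n
    · gcongr
      exact_mod_cast exHeavy_triangle_le_choose n
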